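/- Let n ≥ 1 and let x, v₁, v₂ ∈ ℝⁿ with ‖v₁‖ = ‖v₂‖ = 1. Set b₁ = ⟪x, v₁⟫, b₂ = ⟪x, v₂⟫ and α = ⟪v₁, v₂⟫, and assume |α| < 1 and b₁ - α·b₂ ≠ 0. Define s = (b₂ - α·b₁)/(b₁ - α·b₂). Then for every t ∈ ℝ, |⟪x, v₁ + t·v₂⟫| / ‖v₁ + t·v₂‖ ≤ |⟪x, v₁ + s·v₂⟫| / ‖v₁ + s·v₂‖; that is, s maximizes the function f(t) = |⟪x, v₁ + t·v₂⟫| / ‖v₁ + t·v₂‖ over all real t. -/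

import Mathlib

open scoped RealInnerProductSpace

/-!
Squaring, `f(t)² = (b₁ + t b₂)² / (1 + 2αt + t²)`. The Lagrange-type identity
`(b₁² - 2α b₁ b₂ + b₂²)(1 + 2αt + t²) - (1 - α²)(b₁ + t b₂)² = ((b₂ - α b₁) - t (b₁ - α b₂))²`
shows `f(t)² ≤ (b₁² - 2α b₁ b₂ + b₂²) / (1 - α²)` (the squared norm of the projection of `x`
onto `span {v₁, v₂}`), with equality exactly where the right-hand square vanishes, i.e. at `t = s`.
-/

section InnerProductSpace

variable {E : Type*} [NormedAddCommGroup E] [InnerProductSpace ℝ E]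

lemma norm_add_smul_sq_of_norm_eq_one {v₁ v₂ : E} (hv₁ : ‖v₁‖ = 1) (hv₂ : ‖v₂‖ = 1) (t : ℝ) :
    ‖v₁ + t • v₂‖ ^ 2 = 1 + 2 * ⟪v₁, v₂⟫ * t + t ^ 2 := by
  rw [norm_add_sq_real, real_inner_smul_right, norm_smul, hv₁, hv₂, Real.norm_eq_abs, mul_pow,
    sq_abs]
  ring

lemma abs_inner_div_norm_eq_sqrt (x w : E) :
    |⟪x, w⟫| / ‖w‖ = √(⟪x, w⟫ ^ 2 / ‖w‖ ^ 2) := by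
  rw [Real.sqrt_div (sq_nonneg _), Real.sqrt_sq_eq_abs, Real.sqrt_sq (norm_nonneg _)]

end InnerProductSpace

section Quadratic

variable {α : ℝ}

lemma one_add_two_mul_add_sq_pos (hα : α ^ 2 < 1) (t : ℝ) : 0 < 1 + 2 * α * t + t ^ 2 := by
  nlinarith [sq_nonneg (t + α)]

lemma lagrange_identity (b₁ b₂ α t : ℝ) :
    (b₁ ^ 2 - 2 * α * b₁ * b₂ + b₂ ^ 2) * (1 + 2 * α * t + t ^ 2)
      - (1 - α ^ 2) * (b₁ + t * b₂) ^ 2 = ((b₂ - α * b₁) - t * (b₁ - α * b₂)) ^ 2 := by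
  ring

lemma sq_div_one_add_two_mul_add_sq_le (hα : α ^ 2 < 1) (b₁ b₂ t : ℝ) :
    (b₁ + t * b₂) ^ 2 / (1 + 2 * α * t + t ^ 2)
      ≤ (b₁ ^ 2 - 2 * α * b₁ * b₂ + b₂ ^ 2) / (1 - α ^ 2) := by
  rw [div_le_div_iff₀ (one_add_two_mul_add_sq_pos hα t) (by linarith)]
  linarith [lagrange_identity b₁ b₂ α t, sq_nonneg ((b₂ - α * b₁) - t * (b₁ - α * b₂))]

lemma sq_div_one_add_two_mul_add_sq_eq (hα : α ^ 2 < 1) {b₁ b₂ t : ℝ}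
    (ht : (b₂ - α * b₁) - t * (b₁ - α * b₂) = 0) :
    (b₁ + t * b₂) ^ 2 / (1 + 2 * α * t + t ^ 2)
      = (b₁ ^ 2 - 2 * α * b₁ * b₂ + b₂ ^ 2) / (1 - α ^ 2) := by
  rw [div_eq_div_iff (one_add_two_mul_add_sq_pos hα t).ne' (by linarith)]
  have h := lagrange_identity b₁ b₂ α t
  rw [ht, zero_pow two_ne_zero] at h
  linear_combination -h

end Quadratic

theorem sap_optimal_combination_maximizes {n : ℕ}
    (x v₁ v₂ : EuclideanSpace ℝ (Fin n))
    (hv₁ : ‖v₁‖ = 1) (hv₂ : ‖v₂‖ = 1)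
    (b₁ b₂ α : ℝ) (hb₁ : b₁ = ⟪x, v₁⟫) (hb₂ : b₂ = ⟪x, v₂⟫) (hα : α = ⟪v₁, v₂⟫)
    (hαlt : |α| < 1) (hden : b₁ - α * b₂ ≠ 0)
    (s : ℝ) (hs : s = (b₂ - α * b₁) / (b₁ - α * b₂)) :
    ∀ t : ℝ,
      |⟪x, v₁ + t • v₂⟫| / ‖v₁ + t • v₂‖ ≤ |⟪x, v₁ + s • v₂⟫| / ‖v₁ + s • v₂‖ := by
  intro t
  have hα2 : α ^ 2 < 1 := by rwa [← sq_abs, sq_lt_one_iff₀ (abs_nonneg α)]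
  have hs_crit : (b₂ - α * b₁) - s * (b₁ - α * b₂) = 0 := by
    rw [hs, div_mul_cancel₀ _ hden, sub_self]
  have hratio : ∀ u : ℝ, |⟪x, v₁ + u • v₂⟫| / ‖v₁ + u • v₂‖
      = √((b₁ + u * b₂) ^ 2 / (1 + 2 * α * u + u ^ 2)) := fun u => by
    rw [abs_inner_div_norm_eq_sqrt, norm_add_smul_sq_of_norm_eq_one hv₁ hv₂, inner_add_right,
      real_inner_smul_right, ← hb₁, ← hb₂, ← hα]
  rw [hratio, hratio, sq_div_one_add_two_mul_add_sq_eq hα2 hs_crit]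
  exact Real.sqrt_le_sqrt (sq_div_one_add_two_mul_add_sq_le hα2 b₁ b₂ t)
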